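/- arXiv:2404.13480 — 2 statements merged into one kernel-verified Lean document; each statement's English description precedes it below -/
import Mathlib

section
/- (Representation Theorem) Let ⟨A, →⟩ be a conditional algebra and let Ul(A) be its set of ultrafilters. Then the Stone map φ : A → 𝒫(Ul(A)), φ(a) = {u ∈ Ul(A) : a ∈ u}, is an injective Boolean homomorphism satisfying φ(a → b) = φ(a) →_{T_A} φ(b) for all a, b ∈ A; that is, u ∈ φ(a → b) if and only if for every Z ⊆ φ(a), T_A(u, Z) ⊆ φ(b). -/
/-- A filter of a Boolean algebra: contains `⊤`, upward closed, closed under binary meets. -/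
def IsBFilter {A : Type*} [BooleanAlgebra A] (F : Set A) : Prop :=
  ⊤ ∈ F ∧ (∀ a b : A, a ∈ F → a ≤ b → b ∈ F) ∧ (∀ a b : A, a ∈ F → b ∈ F → a ⊓ b ∈ F)

/-- An ultrafilter: a maximal proper filter. -/
def IsBUltra {A : Type*} [BooleanAlgebra A] (u : Set A) : Prop :=
  IsBFilter u ∧ u ≠ Set.univ ∧
    ∀ F : Set A, IsBFilter F → F ≠ Set.univ → u ⊆ F → F = u

/-- The set (type) of ultrafilters of `A`. -/
abbrev Ult (A : Type*) [BooleanAlgebra A] := {u : Set A // IsBUltra u}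

/-- `D_X(Y) = {b | ∃ a ∈ Y, a → b ∈ X}`. -/
def Dset {A : Type*} [BooleanAlgebra A] (c : A → A → A) (X Y : Set A) : Set A :=
  {b : A | ∃ a ∈ Y, c a b ∈ X}

/-- The Stone map `φ(a) = {u ∈ Ul(A) : a ∈ u}`. -/
def phi {A : Type*} [BooleanAlgebra A] (a : A) : Set (Ult A) := {u : Ult A | a ∈ u.1}

/-- The hybrid ternary relation `T_A` on the ultrafilter frame:
`T_A(u, Z, v)` iff `Z = φ(F)` and `D_u(F) ⊆ v` for some filter `F`. -/
def TRel {A : Type*} [BooleanAlgebra A] (c : A → A → A)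
    (u : Ult A) (Z : Set (Ult A)) (v : Ult A) : Prop :=
  ∃ F : Set A, IsBFilter F ∧ Z = {w : Ult A | F ⊆ w.1} ∧ Dset c u.1 F ⊆ v.1

/-- The π-extension: `U →_{T_A} V = {u : ∀ Z ⊆ U, T_A(u, Z) ⊆ V}`. -/
def condT {A : Type*} [BooleanAlgebra A] (c : A → A → A) (U V : Set (Ult A)) : Set (Ult A) :=
  {u : Ult A | ∀ Z ⊆ U, ∀ v : Ult A, TRel c u Z v → v ∈ V}

section Helpers
variable {A : Type*} [BooleanAlgebra A]

lemma proper_iff {F : Set A} (hF : IsBFilter F) : F ≠ Set.univ ↔ ⊥ ∉ F := by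
  constructor
  · intro h hb
    exact h (Set.eq_univ_of_forall fun x => hF.2.1 ⊥ x hb bot_le)
  · intro h he
    exact h (he ▸ Set.mem_univ ⊥)

lemma ultra_exists {F : Set A} (hF : IsBFilter F) (hp : ⊥ ∉ F) :
    ∃ u : Ult A, F ⊆ u.1 := by
  set S : Set (Set A) := {G | IsBFilter G ∧ ⊥ ∉ G ∧ F ⊆ G} with hS
  have H : ∀ ch ⊆ S, IsChain (· ⊆ ·) ch → ch.Nonempty → ∃ ub ∈ S, ∀ s ∈ ch, s ⊆ ub := by
    rintro ch hch hchain ⟨G0, hG0⟩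
    refine ⟨⋃₀ ch, ⟨⟨?_, ?_, ?_⟩, ?_, ?_⟩, fun s hs => Set.subset_sUnion_of_mem hs⟩
    · exact ⟨G0, hG0, (hch hG0).1.1⟩
    · rintro a b ⟨G, hG, haG⟩ hab
      exact ⟨G, hG, (hch hG).1.2.1 a b haG hab⟩
    · rintro a b ⟨G, hG, haG⟩ ⟨G', hG', hbG'⟩
      rcases hchain.total hG hG' with h | h
      · exact ⟨G', hG', (hch hG').1.2.2 a b (h haG) hbG'⟩
      · exact ⟨G, hG, (hch hG).1.2.2 a b haG (h hbG')⟩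
    · rintro ⟨G, hG, hbG⟩; exact (hch hG).2.1 hbG
    · exact (hch hG0).2.2.trans (Set.subset_sUnion_of_mem hG0)
  obtain ⟨m, hFm, hm⟩ := zorn_subset_nonempty S H F ⟨hF, hp, subset_rfl⟩
  obtain ⟨⟨hmf, hmb, hmF⟩, hmax⟩ := hm
  refine ⟨⟨m, hmf, (proper_iff hmf).2 hmb, ?_⟩, hFm⟩
  intro G hG hGp hmG
  have hGb : ⊥ ∉ G := (proper_iff hG).1 hGp
  exact le_antisymm (hmax ⟨hG, hGb, hmF.trans hmG⟩ hmG) hmG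

lemma ultra_bot_notmem (u : Ult A) : ⊥ ∉ u.1 := (proper_iff u.2.1).1 u.2.2.1

lemma ultra_compl_mem {u : Ult A} {a : A} (h : a ∉ u.1) : aᶜ ∈ u.1 := by
  obtain ⟨⟨ht, hup, hmeet⟩, hne, hmax⟩ := u.2
  by_cases hcase : ∃ f ∈ u.1, f ⊓ aᶜ = ⊥
  · obtain ⟨f, hf, hfa⟩ := hcase
    have hfa' : f ≤ a := by
      rwa [← sdiff_eq, sdiff_eq_bot_iff] at hfa
    exact absurd (hup f a hf hfa') h
  · push_neg at hcase
    set G : Set A := {x | ∃ f ∈ u.1, f ⊓ aᶜ ≤ x} with hG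
    have hGf : IsBFilter G := by
      refine ⟨⟨⊤, ht, le_top⟩, ?_, ?_⟩
      · rintro x y ⟨f, hf, hfx⟩ hxy; exact ⟨f, hf, hfx.trans hxy⟩
      · rintro x y ⟨f, hf, hfx⟩ ⟨g, hg, hgy⟩
        refine ⟨f ⊓ g, hmeet f g hf hg, le_inf (le_trans ?_ hfx) (le_trans ?_ hgy)⟩
        · exact inf_le_inf_right _ inf_le_left
        · exact inf_le_inf_right _ inf_le_right
    have hGb : ⊥ ∉ G := by
      rintro ⟨f, hf, hfb⟩
      exact hcase f hf (le_bot_iff.1 hfb)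
    have huG : u.1 ⊆ G := fun x hx => ⟨x, hx, inf_le_left⟩
    have heq := hmax G hGf ((proper_iff hGf).2 hGb) huG
    exact heq ▸ (⟨⊤, ht, by simp⟩ : aᶜ ∈ G)

lemma ultra_not_both {u : Ult A} {a : A} (h : a ∈ u.1) (h' : aᶜ ∈ u.1) : False := by
  have := u.2.1.2.2 a aᶜ h h'
  simp only [inf_compl_eq_bot] at this
  exact ultra_bot_notmem u this

lemma ultra_sup_mem {u : Ult A} {a b : A} (h : a ⊔ b ∈ u.1) : a ∈ u.1 ∨ b ∈ u.1 := by
  by_contra hc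
  push_neg at hc
  have hab : (a ⊔ b)ᶜ ∈ u.1 := by
    rw [compl_sup]
    exact u.2.1.2.2 _ _ (ultra_compl_mem hc.1) (ultra_compl_mem hc.2)
  exact ultra_not_both h hab

lemma bfilter_principal (a : A) : IsBFilter {x : A | a ≤ x} :=
  ⟨le_top, fun _ y hx hxy => hx.trans hxy, fun _ _ hx hy => le_inf hx hy⟩

lemma sep_ultra {a b : A} (h : ¬ a ≤ b) : ∃ u : Ult A, a ∈ u.1 ∧ b ∉ u.1 := by
  have hb : (⊥ : A) ∉ {x : A | a ⊓ bᶜ ≤ x} := by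
    intro hx
    rw [← sdiff_eq] at hx
    exact h (sdiff_eq_bot_iff.1 (le_bot_iff.1 hx))
  obtain ⟨u, hu⟩ := ultra_exists (bfilter_principal (a ⊓ bᶜ)) hb
  refine ⟨u, u.2.1.2.1 _ a (hu inf_le_left) le_rfl, fun hbu => ?_⟩
  exact ultra_not_both hbu (u.2.1.2.1 _ bᶜ (hu inf_le_right) le_rfl)

lemma mem_of_phiF_subset {F : Set A} {a : A} (hF : IsBFilter F)
    (h : ∀ u : Ult A, F ⊆ u.1 → a ∈ u.1) : a ∈ F := by
  by_cases hcase : ∃ f ∈ F, f ⊓ aᶜ = ⊥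
  · obtain ⟨f, hf, hfa⟩ := hcase
    exact hF.2.1 f a hf (by rwa [← sdiff_eq, sdiff_eq_bot_iff] at hfa)
  · push_neg at hcase
    set G : Set A := {x | ∃ f ∈ F, f ⊓ aᶜ ≤ x} with hG
    have hGf : IsBFilter G := by
      refine ⟨⟨⊤, hF.1, le_top⟩, ?_, ?_⟩
      · rintro x y ⟨f, hf, hfx⟩ hxy; exact ⟨f, hf, hfx.trans hxy⟩
      · rintro x y ⟨f, hf, hfx⟩ ⟨g, hg, hgy⟩
        refine ⟨f ⊓ g, hF.2.2 f g hf hg, le_inf (le_trans ?_ hfx) (le_trans ?_ hgy)⟩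
        · exact inf_le_inf_right _ inf_le_left
        · exact inf_le_inf_right _ inf_le_right
    have hGb : ⊥ ∉ G := by
      rintro ⟨f, hf, hfb⟩
      exact hcase f hf (le_bot_iff.1 hfb)
    obtain ⟨u, hu⟩ := ultra_exists hGf hGb
    have hFu : F ⊆ u.1 := fun x hx => hu ⟨x, hx, inf_le_left⟩
    have hau : a ∈ u.1 := h u hFu
    have hacu : aᶜ ∈ u.1 := hu ⟨⊤, hF.1, inf_le_right⟩
    exact absurd (ultra_not_both hau hacu) not_false

end Helpers

/-- Representation Theorem: the Stone map is an injective Boolean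
homomorphism of the conditional algebra `⟨A, →⟩` into the full complex algebra of its
ultrafilter frame. -/
theorem statement4 {A : Type*} [BooleanAlgebra A] (c : A → A → A)
    (hC1 : ∀ a : A, c a ⊤ = ⊤)
    (hC2 : ∀ a b d : A, c a b ⊓ c a d = c a (b ⊓ d))
    (hC3 : ∀ a b d : A, c (a ⊔ b) d ≤ c a d ⊓ c b d) :
    Function.Injective (phi (A := A)) ∧
    (∀ a b : A, phi (a ⊓ b) = phi a ∩ phi b) ∧
    (∀ a b : A, phi (a ⊔ b) = phi a ∪ phi b) ∧
    (∀ a : A, phi aᶜ = (phi a)ᶜ) ∧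
    phi (⊤ : A) = (Set.univ : Set (Ult A)) ∧
    phi (⊥ : A) = (∅ : Set (Ult A)) ∧
    (∀ a b : A, phi (c a b) = condT c (phi a) (phi b)) ∧
    (∀ (a b : A) (u : Ult A), u ∈ phi (c a b) ↔
      ∀ Z ⊆ phi a, ∀ v : Ult A, TRel c u Z v → v ∈ phi b) := by
  -- monotonicity in the second argument
  have hmono : ∀ a d e : A, d ≤ e → c a d ≤ c a e := by
    intro a d e hde
    have h := hC2 a d e
    rw [inf_eq_left.2 hde] at h
    exact h ▸ inf_le_right
  -- antitonicity in the first argument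
  have hanti : ∀ a x d : A, a ≤ x → c x d ≤ c a d := by
    intro a x d hax
    have h := hC3 a x d
    rw [sup_eq_right.2 hax] at h
    exact h.trans inf_le_left
  have hle : ∀ a b : A, phi a = phi b → a ≤ b := by
    intro a b hab
    by_contra h
    obtain ⟨u, hau, hbu⟩ := sep_ultra h
    exact hbu (hab ▸ hau : u ∈ phi b)
  refine ⟨?_, ?_, ?_, ?_, ?_, ?_, ?_, ?_⟩
  · intro a b hab
    exact le_antisymm (hle a b hab) (hle b a hab.symm)
  · intro a b
    ext u
    constructor
    · intro h
      exact ⟨u.2.1.2.1 _ a h inf_le_left, u.2.1.2.1 _ b h inf_le_right⟩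
    · rintro ⟨ha, hb⟩
      exact u.2.1.2.2 a b ha hb
  · intro a b
    ext u
    constructor
    · intro h
      exact ultra_sup_mem h
    · rintro (h | h)
      · exact u.2.1.2.1 a _ h le_sup_left
      · exact u.2.1.2.1 b _ h le_sup_right
  · intro a
    ext u
    constructor
    · intro h ha
      exact ultra_not_both ha h
    · intro h
      exact ultra_compl_mem h
  · exact Set.eq_univ_of_forall fun u => u.2.1.1
  · exact Set.eq_empty_of_forall_notMem fun u => ultra_bot_notmem u
  · intro a b
    ext u
    constructor
    · -- forward direction
      intro hu Z hZ v hT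
      obtain ⟨F, hF, hZF, hD⟩ := hT
      have haF : a ∈ F := by
        apply mem_of_phiF_subset hF
        intro w hw
        exact hZ (hZF ▸ hw : w ∈ Z)
      exact hD ⟨a, haF, hu⟩
    · -- backward direction
      intro h
      by_contra hcab
      set D : Set A := {d | c a d ∈ u.1} with hD
      have hDf : IsBFilter D := by
        refine ⟨?_, ?_, ?_⟩
        · show c a ⊤ ∈ u.1
          rw [hC1]
          exact u.2.1.1
        · intro d e hd hde
          exact u.2.1.2.1 _ _ hd (hmono a d e hde)
        · intro d e hd he
          have := u.2.1.2.2 _ _ hd he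
          rwa [hC2] at this
      have hbD : ∀ d ∈ D, ¬ d ≤ b := by
        intro d hd hdb
        exact hcab (u.2.1.2.1 _ _ hd (hmono a d b hdb))
      set G : Set A := {x | ∃ d ∈ D, d ⊓ bᶜ ≤ x} with hG
      have hGf : IsBFilter G := by
        refine ⟨⟨⊤, hDf.1, le_top⟩, ?_, ?_⟩
        · rintro x y ⟨d, hd, hdx⟩ hxy; exact ⟨d, hd, hdx.trans hxy⟩
        · rintro x y ⟨d, hd, hdx⟩ ⟨e, he, hey⟩
          refine ⟨d ⊓ e, hDf.2.2 d e hd he, le_inf (le_trans ?_ hdx) (le_trans ?_ hey)⟩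
          · exact inf_le_inf_right _ inf_le_left
          · exact inf_le_inf_right _ inf_le_right
      have hGb : ⊥ ∉ G := by
        rintro ⟨d, hd, hdb⟩
        rw [← sdiff_eq] at hdb
        exact hbD d hd (sdiff_eq_bot_iff.1 (le_bot_iff.1 hdb))
      obtain ⟨v, hv⟩ := ultra_exists hGf hGb
      have hDv : D ⊆ v.1 := fun d hd => hv ⟨d, hd, inf_le_left⟩
      have hbv : b ∉ v.1 := fun hbv =>
        ultra_not_both hbv (hv ⟨⊤, hDf.1, inf_le_right⟩)
      have hT : TRel c u {w : Ult A | {x : A | a ≤ x} ⊆ w.1} v := by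
        refine ⟨{x : A | a ≤ x}, bfilter_principal a, rfl, ?_⟩
        rintro e ⟨x, hax, hxe⟩
        exact hDv (u.2.1.2.1 _ _ hxe (hanti a x e hax))
      have hZsub : {w : Ult A | {x : A | a ≤ x} ⊆ w.1} ⊆ phi a :=
        fun w hw => hw (le_refl a)
      exact hbv (h _ hZsub v hT)
  · intro a b u
    constructor
    · intro hu Z hZ v hT
      -- reuse: u ∈ phi (c a b) means c a b ∈ u
      obtain ⟨F, hF, hZF, hD⟩ := hT
      have haF : a ∈ F := mem_of_phiF_subset hF fun w hw => hZ (hZF ▸ hw : w ∈ Z)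
      exact hD ⟨a, haF, hu⟩
    · intro h
      by_contra hcab
      set D : Set A := {d | c a d ∈ u.1} with hD
      have hDf : IsBFilter D := by
        refine ⟨?_, ?_, ?_⟩
        · show c a ⊤ ∈ u.1
          rw [hC1]
          exact u.2.1.1
        · intro d e hd hde
          exact u.2.1.2.1 _ _ hd (hmono a d e hde)
        · intro d e hd he
          have := u.2.1.2.2 _ _ hd he
          rwa [hC2] at this
      have hbD : ∀ d ∈ D, ¬ d ≤ b := by
        intro d hd hdb
        exact hcab (u.2.1.2.1 _ _ hd (hmono a d b hdb))
      set G : Set A := {x | ∃ d ∈ D, d ⊓ bᶜ ≤ x} with hG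
      have hGf : IsBFilter G := by
        refine ⟨⟨⊤, hDf.1, le_top⟩, ?_, ?_⟩
        · rintro x y ⟨d, hd, hdx⟩ hxy; exact ⟨d, hd, hdx.trans hxy⟩
        · rintro x y ⟨d, hd, hdx⟩ ⟨e, he, hey⟩
          refine ⟨d ⊓ e, hDf.2.2 d e hd he, le_inf (le_trans ?_ hdx) (le_trans ?_ hey)⟩
          · exact inf_le_inf_right _ inf_le_left
          · exact inf_le_inf_right _ inf_le_right
      have hGb : ⊥ ∉ G := by
        rintro ⟨d, hd, hdb⟩
        rw [← sdiff_eq] at hdb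
        exact hbD d hd (sdiff_eq_bot_iff.1 (le_bot_iff.1 hdb))
      obtain ⟨v, hv⟩ := ultra_exists hGf hGb
      have hDv : D ⊆ v.1 := fun d hd => hv ⟨d, hd, inf_le_left⟩
      have hbv : b ∉ v.1 := fun hbv =>
        ultra_not_both hbv (hv ⟨⊤, hDf.1, inf_le_right⟩)
      have hT : TRel c u {w : Ult A | {x : A | a ≤ x} ⊆ w.1} v := by
        refine ⟨{x : A | a ≤ x}, bfilter_principal a, rfl, ?_⟩
        rintro e ⟨x, hax, hxe⟩
        exact hDv (u.2.1.2.1 _ _ hxe (hanti a x e hax))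
      have hZsub : {w : Ult A | {x : A | a ≤ x} ⊆ w.1} ⊆ phi a :=
        fun w hw => hw (le_refl a)
      exact hbv (h _ hZsub v hT)
end

section
/- Let ⟨A, →⟩ be a conditional algebra. Then A is a pseudo-subordination algebra, i.e., it satisfies both (C1*) ⊥ → a = ⊤ for all a ∈ A and (C3*) (a → c) ⊓ (b → c) ≤ (a ⊔ b) → c for all a, b, c ∈ A, if and only if for all ultrafilters u, v of A and every filter F of A (the improper filter F = A included), D_u(F) ⊆ v implies that there exists an ultrafilter w of A with F ⊆ w and D_u(w) ⊆ v. -/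
section Aux

variable {A : Type*} [BooleanAlgebra A]

lemma IsBFilter.bot_notin {F : Set A} (hF : IsBFilter F) (h : F ≠ Set.univ) : ⊥ ∉ F := by
  intro hb
  exact h (Set.eq_univ_of_forall fun x => hF.2.1 ⊥ x hb bot_le)

lemma IsBFilter.ne_univ {F : Set A} (hF : IsBFilter F) (h : ⊥ ∉ F) : F ≠ Set.univ := by
  intro he; exact h (he ▸ Set.mem_univ ⊥)

/-- The filter generated by a filter `F` and an element `a`. -/
def genF (F : Set A) (a : A) : Set A := {b | ∃ g ∈ F, g ⊓ a ≤ b}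

lemma genF_isFilter {F : Set A} (hF : IsBFilter F) (a : A) : IsBFilter (genF F a) := by
  refine ⟨⟨⊤, hF.1, le_top⟩, ?_, ?_⟩
  · rintro x y ⟨g, hg, hle⟩ hxy; exact ⟨g, hg, hle.trans hxy⟩
  · rintro x y ⟨g, hg, hle⟩ ⟨g', hg', hle'⟩
    exact ⟨g ⊓ g', hF.2.2 _ _ hg hg', by
      calc g ⊓ g' ⊓ a ≤ (g ⊓ a) ⊓ (g' ⊓ a) := by
            simp [inf_assoc, inf_comm, inf_left_comm, le_refl]
        _ ≤ x ⊓ y := inf_le_inf hle hle'⟩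

lemma subset_genF {F : Set A} (hF : IsBFilter F) (a : A) : F ⊆ genF F a := by
  intro x hx; exact ⟨x, hx, inf_le_left⟩

lemma mem_genF {F : Set A} (hF : IsBFilter F) (a : A) : a ∈ genF F a :=
  ⟨⊤, hF.1, by simp⟩

lemma bfilter_sUnion_chain {cc : Set (Set A)} (h : ∀ G ∈ cc, IsBFilter G)
    (hch : IsChain (· ⊆ ·) cc) (hne : cc.Nonempty) : IsBFilter (⋃₀ cc) := by
  obtain ⟨G0, hG0⟩ := hne
  refine ⟨⟨G0, hG0, (h G0 hG0).1⟩, ?_, ?_⟩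
  · rintro x y ⟨G, hG, hx⟩ hxy; exact ⟨G, hG, (h G hG).2.1 x y hx hxy⟩
  · rintro x y ⟨G, hG, hx⟩ ⟨G', hG', hy⟩
    rcases hch.total hG hG' with hsub | hsub
    · exact ⟨G', hG', (h G' hG').2.2 x y (hsub hx) hy⟩
    · exact ⟨G, hG, (h G hG).2.2 x y hx (hsub hy)⟩

/-- Every proper filter extends to an ultrafilter. -/
lemma exists_ultra_ext {F : Set A} (hF : IsBFilter F) (hb : ⊥ ∉ F) :
    ∃ u : Set A, IsBUltra u ∧ F ⊆ u := by
  obtain ⟨M, hFM, hM⟩ := zorn_subset_nonempty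
    {G : Set A | IsBFilter G ∧ ⊥ ∉ G ∧ F ⊆ G}
    (fun cc hcc hch hne => by
      refine ⟨⋃₀ cc, ⟨bfilter_sUnion_chain (fun G hG => (hcc hG).1) hch hne, ?_, ?_⟩,
        fun s hs => Set.subset_sUnion_of_mem hs⟩
      · rintro ⟨G, hG, hbG⟩; exact (hcc hG).2.1 hbG
      · obtain ⟨G0, hG0⟩ := hne
        exact ((hcc hG0).2.2).trans (Set.subset_sUnion_of_mem hG0))
    F ⟨hF, hb, Set.Subset.rfl⟩
  refine ⟨M, ⟨hM.prop.1, hM.prop.1.ne_univ hM.prop.2.1, ?_⟩, hFM⟩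
  intro H hH hHne hMH
  have : H ∈ {G : Set A | IsBFilter G ∧ ⊥ ∉ G ∧ F ⊆ G} :=
    ⟨hH, hH.bot_notin hHne, hFM.trans hMH⟩
  exact le_antisymm (hM.2 this hMH) hMH

lemma ultra_compl_mem_s17 {u : Set A} (hu : IsBUltra u) {a : A} (ha : a ∉ u) : aᶜ ∈ u := by
  have hgen := genF_isFilter hu.1 a
  by_cases hne : genF u a = Set.univ
  · have : ⊥ ∈ genF u a := hne ▸ Set.mem_univ ⊥
    obtain ⟨g, hg, hle⟩ := this
    have : g ≤ aᶜ := by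
      have h1 : g ⊓ a = ⊥ := le_bot_iff.mp hle
      calc g = g ⊓ (a ⊔ aᶜ) := by simp
        _ = (g ⊓ a) ⊔ (g ⊓ aᶜ) := inf_sup_left g a aᶜ
        _ = g ⊓ aᶜ := by rw [h1, bot_sup_eq]
        _ ≤ aᶜ := inf_le_right
    exact hu.1.2.1 g aᶜ hg this
  · have := hu.2.2 _ hgen hne (subset_genF hu.1 a)
    exact absurd (this ▸ mem_genF hu.1 a) ha

lemma ultra_not_mem_compl {u : Set A} (hu : IsBUltra u) {a : A} (ha : aᶜ ∈ u) : a ∉ u := by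
  intro h
  have : a ⊓ aᶜ ∈ u := hu.1.2.2 _ _ h ha
  rw [inf_compl_eq_bot] at this
  exact hu.1.bot_notin hu.2.1 this

lemma ultra_prime {u : Set A} (hu : IsBUltra u) {a b : A} (h : a ⊔ b ∈ u) :
    a ∈ u ∨ b ∈ u := by
  by_contra hc
  push_neg at hc
  have ha := ultra_compl_mem_s17 hu hc.1
  have hb := ultra_compl_mem_s17 hu hc.2
  have : aᶜ ⊓ bᶜ ∈ u := hu.1.2.2 _ _ ha hb
  rw [← compl_sup] at this
  exact ultra_not_mem_compl hu this h

variable {c : A → A → A}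

lemma c_mono (hC2 : ∀ a b d : A, c a b ⊓ c a d = c a (b ⊓ d))
    {a b d : A} (h : b ≤ d) : c a b ≤ c a d := by
  have : c a b ⊓ c a d = c a b := by rw [hC2, inf_eq_left.mpr h]
  rw [← this]; exact inf_le_right

lemma c_anti (hC3 : ∀ a b d : A, c (a ⊔ b) d ≤ c a d ⊓ c b d)
    {a a' b : A} (h : a ≤ a') : c a' b ≤ c a b := by
  have := hC3 a a' b
  rw [sup_eq_right.mpr h] at this
  exact this.trans inf_le_left

end Aux

/-- a conditional algebra is a pseudo-subordination algebra, i.e.,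
satisfies (C1*) and (C3*), iff on its dual space `T_A(u, Y, v)` implies
`T_A(u, {w}, v)` for some `w ∈ Y`. -/
theorem statement17 {A : Type*} [BooleanAlgebra A] (c : A → A → A)
    (hC1 : ∀ a : A, c a ⊤ = ⊤)
    (hC2 : ∀ a b d : A, c a b ⊓ c a d = c a (b ⊓ d))
    (hC3 : ∀ a b d : A, c (a ⊔ b) d ≤ c a d ⊓ c b d) :
    ((∀ a : A, c ⊥ a = ⊤) ∧ (∀ a b d : A, c a d ⊓ c b d ≤ c (a ⊔ b) d)) ↔
    (∀ u v : Set A, IsBUltra u → IsBUltra v →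
      ∀ F : Set A, IsBFilter F → Dset c u F ⊆ v →
        ∃ w : Set A, IsBUltra w ∧ F ⊆ w ∧ Dset c u w ⊆ v) := by
  constructor
  · rintro ⟨h1, h3⟩ u v hu hv F hF hD
    -- Zorn on filters G ⊇ F with Dset c u G ⊆ v
    set S : Set (Set A) := {G | IsBFilter G ∧ F ⊆ G ∧ Dset c u G ⊆ v} with hS
    obtain ⟨M, hFM, hM⟩ := zorn_subset_nonempty S
      (fun cc hcc hch hne => by
        refine ⟨⋃₀ cc, ⟨bfilter_sUnion_chain (fun G hG => (hcc hG).1) hch hne, ?_, ?_⟩,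
          fun s hs => Set.subset_sUnion_of_mem hs⟩
        · obtain ⟨G0, hG0⟩ := hne
          exact ((hcc hG0).2.1).trans (Set.subset_sUnion_of_mem hG0)
        · rintro b ⟨x, ⟨G, hG, hx⟩, hcx⟩
          exact (hcc hG).2.2 ⟨x, hx, hcx⟩)
      F ⟨hF, Set.Subset.rfl, hD⟩
    obtain ⟨hMf, hFM', hMD⟩ := hM.prop
    -- M is proper
    have hMb : ⊥ ∉ M := by
      intro hb
      have : (⊥ : A) ∈ Dset c u M := ⟨⊥, hb, by rw [h1]; exact hu.1.1⟩
      exact hv.1.bot_notin hv.2.1 (hMD this)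
    -- key: for each a, a ∈ M or aᶜ ∈ M
    have hkey : ∀ a : A, a ∈ M ∨ aᶜ ∈ M := by
      intro a
      have hdich : Dset c u (genF M a) ⊆ v ∨ Dset c u (genF M aᶜ) ⊆ v := by
        by_contra hcon
        push_neg at hcon
        obtain ⟨⟨hna, hnac⟩⟩ := And.intro hcon trivial
        obtain ⟨b₁, hb₁, hb₁v⟩ := Set.not_subset.mp hna
        obtain ⟨b₂, hb₂, hb₂v⟩ := Set.not_subset.mp hnac
        obtain ⟨x₁, ⟨g₁, hg₁, hle₁⟩, hcx₁⟩ := hb₁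
        obtain ⟨x₂, ⟨g₂, hg₂, hle₂⟩, hcx₂⟩ := hb₂
        set g := g₁ ⊓ g₂ with hg
        have hgM : g ∈ M := hMf.2.2 _ _ hg₁ hg₂
        set b := b₁ ⊔ b₂ with hb
        have h1u : c (g ⊓ a) b ∈ u := by
          refine hu.1.2.1 _ _ hcx₁ ?_
          calc c x₁ b₁ ≤ c (g ⊓ a) b₁ :=
                c_anti hC3 (le_trans (inf_le_inf inf_le_left le_rfl) hle₁)
            _ ≤ c (g ⊓ a) b := c_mono hC2 le_sup_left
        have h2u : c (g ⊓ aᶜ) b ∈ u := by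
          refine hu.1.2.1 _ _ hcx₂ ?_
          calc c x₂ b₂ ≤ c (g ⊓ aᶜ) b₂ :=
                c_anti hC3 (le_trans (inf_le_inf inf_le_right le_rfl) hle₂)
            _ ≤ c (g ⊓ aᶜ) b := c_mono hC2 le_sup_right
        have hmeet : c (g ⊓ a) b ⊓ c (g ⊓ aᶜ) b ∈ u := hu.1.2.2 _ _ h1u h2u
        have hgb : c g b ∈ u := by
          refine hu.1.2.1 _ _ hmeet ?_
          have := h3 (g ⊓ a) (g ⊓ aᶜ) b
          rwa [← inf_sup_left, sup_compl_eq_top, inf_top_eq] at this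
        have : b ∈ v := hMD ⟨g, hgM, hgb⟩
        rcases ultra_prime hv this with h | h
        · exact hb₁v h
        · exact hb₂v h
      rcases hdich with h | h
      · left
        have hGS : genF M a ∈ S :=
          ⟨genF_isFilter hMf a, hFM'.trans (subset_genF hMf a), h⟩
        have := hM.2 hGS (subset_genF hMf a)
        exact (le_antisymm this (subset_genF hMf a) : genF M a = M) ▸ mem_genF hMf a
      · right
        have hGS : genF M aᶜ ∈ S :=
          ⟨genF_isFilter hMf aᶜ, hFM'.trans (subset_genF hMf aᶜ), h⟩
        have := hM.2 hGS (subset_genF hMf aᶜ)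
        exact (le_antisymm this (subset_genF hMf aᶜ) : genF M aᶜ = M) ▸ mem_genF hMf aᶜ
    -- M is an ultrafilter
    refine ⟨M, ⟨hMf, hMf.ne_univ hMb, ?_⟩, hFM', hMD⟩
    intro H hH hHne hMH
    apply Set.eq_of_subset_of_subset _ hMH
    intro x hx
    by_contra hxM
    rcases hkey x with h | h
    · exact hxM h
    · have : x ⊓ xᶜ ∈ H := hH.2.2 _ _ hx (hMH h)
      rw [inf_compl_eq_bot] at this
      exact hH.bot_notin hHne this
  · intro hT
    constructor
    · -- (C1*)
      intro a
      by_contra hne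
      have hxb : (c ⊥ a)ᶜ ≠ ⊥ := by
        simp only [ne_eq, compl_eq_bot]; exact hne
      -- principal filter at (c ⊥ a)ᶜ
      have hP : IsBFilter {y : A | (c ⊥ a)ᶜ ≤ y} :=
        ⟨le_top, fun x y hx hxy => hx.trans hxy, fun x y hx hy => le_inf hx hy⟩
      have hPb : ⊥ ∉ {y : A | (c ⊥ a)ᶜ ≤ y} := by
        intro hb; exact hxb (le_bot_iff.mp hb)
      obtain ⟨u, hu, hPu⟩ := exists_ultra_ext hP hPb
      -- D = Dset c u univ = {b | c ⊥ b ∈ u}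
      have hDeq : Dset c u Set.univ = {b : A | c ⊥ b ∈ u} := by
        ext b
        constructor
        · rintro ⟨x, -, hcx⟩
          exact hu.1.2.1 _ _ hcx (c_anti hC3 bot_le)
        · intro hb; exact ⟨⊥, Set.mem_univ ⊥, hb⟩
      have hDf : IsBFilter (Dset c u Set.univ) := by
        rw [hDeq]
        refine ⟨?_, ?_, ?_⟩
        · show c ⊥ ⊤ ∈ u; rw [hC1]; exact hu.1.1
        · intro x y hx hxy; exact hu.1.2.1 _ _ hx (c_mono hC2 hxy)
        · intro x y hx hy
          have := hu.1.2.2 _ _ hx hy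
          rwa [hC2] at this
      have hDb : ⊥ ∉ Dset c u Set.univ := by
        rw [hDeq]
        intro hb
        have h1 : c ⊥ a ∈ u := hu.1.2.1 _ _ hb (c_mono hC2 bot_le)
        have h2 : (c ⊥ a)ᶜ ∈ u := hPu le_rfl
        exact ultra_not_mem_compl hu h2 h1
      obtain ⟨v, hv, hDv⟩ := exists_ultra_ext hDf hDb
      obtain ⟨w, hw, huw, -⟩ := hT u v hu hv Set.univ
        ⟨Set.mem_univ ⊤, fun _ _ _ _ => Set.mem_univ _, fun _ _ _ _ => Set.mem_univ _⟩ hDv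
      exact hw.2.1 (Set.eq_univ_of_univ_subset huw)
    · -- (C3*)
      intro a b d
      by_contra hle
      set x := c a d ⊓ c b d ⊓ (c (a ⊔ b) d)ᶜ with hxdef
      have hxb : x ≠ ⊥ := by
        intro h
        apply hle
        have : c a d ⊓ c b d ≤ c (a ⊔ b) d := by
          rw [← sdiff_eq_bot_iff, sdiff_eq]
          exact h
        exact this
      have hP : IsBFilter {y : A | x ≤ y} :=
        ⟨le_top, fun p q hp hpq => hp.trans hpq, fun p q hp hq => le_inf hp hq⟩
      have hPb : ⊥ ∉ {y : A | x ≤ y} := fun hb => hxb (le_bot_iff.mp hb)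
      obtain ⟨u, hu, hPu⟩ := exists_ultra_ext hP hPb
      have hxu : x ∈ u := hPu le_rfl
      -- F = principal filter at a ⊔ b
      set F : Set A := {y : A | a ⊔ b ≤ y} with hFdef
      have hF : IsBFilter F :=
        ⟨le_top, fun p q hp hpq => hp.trans hpq, fun p q hp hq => le_inf hp hq⟩
      have hDeq : Dset c u F = {e : A | c (a ⊔ b) e ∈ u} := by
        ext e
        constructor
        · rintro ⟨y, hy, hcy⟩
          exact hu.1.2.1 _ _ hcy (c_anti hC3 hy)
        · intro he; exact ⟨a ⊔ b, le_rfl, he⟩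
      have hDf : IsBFilter (Dset c u F) := by
        rw [hDeq]
        refine ⟨?_, ?_, ?_⟩
        · show c (a ⊔ b) ⊤ ∈ u; rw [hC1]; exact hu.1.1
        · intro p q hp hpq; exact hu.1.2.1 _ _ hp (c_mono hC2 hpq)
        · intro p q hp hq
          have := hu.1.2.2 _ _ hp hq
          rwa [hC2] at this
      have hdnotD : d ∉ Dset c u F := by
        rw [hDeq]
        intro hd
        have h2 : (c (a ⊔ b) d)ᶜ ∈ u :=
          hu.1.2.1 _ _ hxu inf_le_right
        exact ultra_not_mem_compl hu h2 hd
      -- extend Dset c u F together with dᶜ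
      have hG := genF_isFilter hDf dᶜ
      have hGb : ⊥ ∉ genF (Dset c u F) dᶜ := by
        rintro ⟨g, hg, hle'⟩
        apply hdnotD
        have : g ≤ d := by
          have h1 : g ⊓ dᶜ = ⊥ := le_bot_iff.mp hle'
          calc g = g ⊓ (d ⊔ dᶜ) := by simp
            _ = (g ⊓ d) ⊔ (g ⊓ dᶜ) := inf_sup_left g d dᶜ
            _ = g ⊓ d := by rw [h1, sup_bot_eq]
            _ ≤ d := inf_le_right
        exact hDf.2.1 _ _ hg this
      obtain ⟨v, hv, hGv⟩ := exists_ultra_ext hG hGb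
      have hDv : Dset c u F ⊆ v := (subset_genF hDf dᶜ).trans hGv
      have hdcv : dᶜ ∈ v := hGv (mem_genF hDf dᶜ)
      have hdnv : d ∉ v := ultra_not_mem_compl hv hdcv
      obtain ⟨w, hw, hFw, hDw⟩ := hT u v hu hv F hF hDv
      have habw : a ⊔ b ∈ w := hFw le_rfl
      have hxad : x ≤ c a d := inf_le_left.trans inf_le_left
      have hxbd : x ≤ c b d := inf_le_left.trans inf_le_right
      rcases ultra_prime hw habw with h | h
      · exact hdnv (hDw ⟨a, h, hu.1.2.1 _ _ hxu hxad⟩)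
      · exact hdnv (hDw ⟨b, h, hu.1.2.1 _ _ hxu hxbd⟩)
end
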